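/- arXiv:1808.10674 — 4 statements merged into one kernel-verified Lean document; each statement's English description precedes it below -/
import Mathlib

section
/- Let A, B > 0, C a real number, and q > 1. If A ≤ B·A^{1/q} + C, then A ≤ B^{q/(q-1)} + (q/(q-1))·max(C, 0). -/
/-! Young's inequality with exponents `q` and `p = q/(q-1)` gives `B·A^(1/q) ≤ A/q + B^p/p`;
absorbing `A/q` into the left-hand side leaves `A/p ≤ B^p/p + C`. -/

namespace Real.HolderConjugate

variable {a b c p q : ℝ}

theorem mul_rpow_one_div_le (hpq : p.HolderConjugate q) (ha : 0 ≤ a) (hb : 0 ≤ b) :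
    b * a ^ (1 / q) ≤ a / q + b ^ p / p := by
  have hpow : (a ^ (1 / q)) ^ q = a := by
    rw [← Real.rpow_mul ha, one_div_mul_cancel hpq.symm.ne_zero, Real.rpow_one]
  calc b * a ^ (1 / q) = a ^ (1 / q) * b := mul_comm _ _
    _ ≤ (a ^ (1 / q)) ^ q / q + b ^ p / p :=
      Real.young_inequality_of_nonneg (Real.rpow_nonneg ha _) hb hpq.symm
    _ = a / q + b ^ p / p := by rw [hpow]

theorem le_rpow_add_mul_of_le_mul_rpow_one_div_add (hpq : p.HolderConjugate q) (ha : 0 ≤ a)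
    (hb : 0 ≤ b) (h : a ≤ b * a ^ (1 / q) + c) : a ≤ b ^ p + p * c := by
  have hp := hpq.pos
  have habsorb : a / p ≤ b ^ p / p + c := by
    have hinv : p⁻¹ = 1 - q⁻¹ := eq_sub_of_add_eq hpq.inv_add_inv_eq_one
    have hyoung := hpq.mul_rpow_one_div_le ha hb
    calc a / p = a - a / q := by simp only [div_eq_mul_inv, hinv]; ring
      _ ≤ b ^ p / p + c := by linarith
  calc a = p * (a / p) := by field_simp
    _ ≤ p * (b ^ p / p + c) := by gcongr
    _ = b ^ p + p * c := by field_simp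

end Real.HolderConjugate

/-- Self-dominated inequality: if `A ≤ B·A^(1/q) + C` with `A, B > 0` and `q > 1`,
then `A ≤ B^(q/(q-1)) + (q/(q-1))·max C 0`. -/
theorem self_dominated_inequality (A B C q : ℝ) (hA : 0 < A) (hB : 0 < B) (hq : 1 < q)
    (h : A ≤ B * A ^ (1 / q) + C) :
    A ≤ B ^ (q / (q - 1)) + (q / (q - 1)) * max C 0 := by
  have hpq : (q / (q - 1)).HolderConjugate q := (Real.HolderConjugate.conjExponent hq).symm
  calc A ≤ B ^ (q / (q - 1)) + (q / (q - 1)) * C :=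
        hpq.le_rpow_add_mul_of_le_mul_rpow_one_div_add hA.le hB.le h
    _ ≤ B ^ (q / (q - 1)) + (q / (q - 1)) * max C 0 := by
      gcongr
      exact le_max_left C 0
end

section
/- Let θ > 0 and define χ₂(δ) = Γ(δ)²·(θΓ(θ+1)/Γ(θ+2δ) − Γ(θ+1)²/Γ(θ+δ)²) for δ > 0. Then as δ → 0⁺, χ₂(δ) converges to (θ²/Γ(θ)²)·(Γ'(θ)² − Γ(θ)Γ''(θ)). -/
/-!
Since `Γ(δ) = Γ(δ+1)/δ` and `Γ(θ+1) = θΓ(θ)`, `χ₂(δ)` is a prefactor tending to `θ²/Γ(θ)²` times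
`(Γ(θ+δ)² − Γ(θ)Γ(θ+2δ))/δ²`. The numerator of this quotient vanishes at `δ = 0`, and so does its
derivative `2(Γ(θ+δ)Γ'(θ+δ) − Γ(θ)Γ'(θ+2δ))`, whose derivative at `0` is `2(Γ'(θ)² − Γ(θ)Γ''(θ))`;
l'Hôpital's rule therefore gives the limit `Γ'(θ)² − Γ(θ)Γ''(θ)`.
-/

open Filter Topology

theorem Complex.analyticAt_Gamma {s : ℂ} (hs : ∀ m : ℕ, s ≠ -m) : AnalyticAt ℂ Gamma s := by
  simpa using (differentiable_one_div_Gamma.analyticAt s).fun_inv (inv_ne_zero (Gamma_ne_zero hs))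

theorem Real.analyticAt_Gamma {x : ℝ} (hx : ∀ m : ℕ, x ≠ -m) : AnalyticAt ℝ Gamma x := by
  simpa [Complex.Gamma_ofReal] using
    (Complex.analyticAt_Gamma (s := x) (by exact_mod_cast hx)).re_ofReal

theorem Real.analyticOnNhd_Gamma_Ioi : AnalyticOnNhd ℝ Gamma (Set.Ioi 0) := fun x hx =>
  analyticAt_Gamma fun m => by
    have hx : (0 : ℝ) < x := hx
    linarith [(m.cast_nonneg : (0 : ℝ) ≤ m)]

theorem tendsto_const_add_mul_nhds_zero (a c : ℝ) :
    Tendsto (fun δ => a + c * δ) (𝓝 0) (𝓝 a) := by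
  simpa using ((continuous_const_mul c).const_add a).tendsto 0

theorem HasDerivAt.comp_const_add_mul {g : ℝ → ℝ} {g' : ℝ} (a c t : ℝ)
    (hg : HasDerivAt g g' (a + c * t)) : HasDerivAt (fun t => g (a + c * t)) (g' * c) t := by
  simpa [Function.comp_def] using hg.comp t (((hasDerivAt_id t).const_mul c).const_add a)

theorem tendsto_sq_sub_mul_div_sq {f : ℝ → ℝ} {a : ℝ}
    (hf : ∀ᶠ x in 𝓝 a, DifferentiableAt ℝ f x) (hf' : DifferentiableAt ℝ (deriv f) a) :
    Tendsto (fun δ => (f (a + δ) ^ 2 - f a * f (a + 2 * δ)) / δ ^ 2) (𝓝[≠] 0)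
      (𝓝 (deriv f a ^ 2 - f a * deriv (deriv f) a)) := by
  set φ : ℝ → ℝ := fun δ => f (a + δ) * deriv f (a + δ) - f a * deriv f (a + 2 * δ)
  have hF : ∀ᶠ δ in 𝓝 0,
      HasDerivAt (fun δ => f (a + δ) ^ 2 - f a * f (a + 2 * δ)) (2 * φ δ) δ := by
    filter_upwards [(tendsto_const_add_mul_nhds_zero a 1).eventually hf,
      (tendsto_const_add_mul_nhds_zero a 2).eventually hf] with δ h1 h2
    rw [one_mul] at h1
    exact (((h1.hasDerivAt.comp_const_add a δ).fun_pow 2).fun_sub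
      ((h2.hasDerivAt.comp_const_add_mul a 2 δ).const_mul (f a))).congr_deriv
        (by simp [φ]; ring)
  have hφ : HasDerivAt φ (deriv f a ^ 2 - f a * deriv (deriv f) a) 0 := by
    have hfa : HasDerivAt f (deriv f a) (a + 0) := by simpa using hf.self_of_nhds.hasDerivAt
    have hf'a : HasDerivAt (deriv f) (deriv (deriv f) a) (a + 0) := by
      simpa using hf'.hasDerivAt
    have hf'a₂ : HasDerivAt (deriv f) (deriv (deriv f) a) (a + 2 * 0) := by
      simpa using hf'.hasDerivAt
    exact (((hfa.comp_const_add a 0).fun_mul (hf'a.comp_const_add a 0)).fun_sub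
      ((hf'a₂.comp_const_add_mul a 2 0).const_mul (f a))).congr_deriv (by simp; ring)
  refine HasDerivAt.lhopital_zero_nhdsNE (f' := fun δ => 2 * φ δ) (g' := fun δ => 2 * δ)
    (eventually_nhdsWithin_of_eventually_nhds hF) ?_ ?_ ?_ ?_ ?_
  · exact Eventually.of_forall fun δ => by simpa [mul_comm] using hasDerivAt_pow 2 δ
  · filter_upwards [self_mem_nhdsWithin] with δ hδ using mul_ne_zero two_ne_zero hδ
  · simpa [sq] using hF.self_of_nhds.continuousAt.tendsto.mono_left nhdsWithin_le_nhds
  · simpa using ((continuous_pow 2).tendsto (0 : ℝ)).mono_left nhdsWithin_le_nhds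
  · simp only [mul_div_mul_left _ _ (two_ne_zero' ℝ)]
    simpa [φ, div_eq_inv_mul] using hφ.tendsto_slope_zero

open Real in
theorem chi2_factorization {θ δ : ℝ} (hθ : 0 < θ) (hδ : 0 < δ) :
    Gamma δ ^ 2 * (θ * Gamma (θ + 1) / Gamma (θ + 2 * δ) - Gamma (θ + 1) ^ 2 / Gamma (θ + δ) ^ 2) =
      θ * Gamma (θ + 1) * Gamma (δ + 1) ^ 2 / (Gamma (θ + 2 * δ) * Gamma (θ + δ) ^ 2) *
        ((Gamma (θ + δ) ^ 2 - Gamma θ * Gamma (θ + 2 * δ)) / δ ^ 2) := by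
  have h₁ : Gamma (θ + δ) ≠ 0 := (Gamma_pos_of_pos (by positivity)).ne'
  have h₂ : Gamma (θ + 2 * δ) ≠ 0 := (Gamma_pos_of_pos (by positivity)).ne'
  rw [Gamma_add_one hδ.ne', Gamma_add_one hθ.ne']
  field_simp

open Real in
theorem tendsto_chi2_prefactor {θ : ℝ} (hθ : 0 < θ) :
    Tendsto (fun δ => θ * Gamma (θ + 1) * Gamma (δ + 1) ^ 2 /
      (Gamma (θ + 2 * δ) * Gamma (θ + δ) ^ 2)) (𝓝 0) (𝓝 (θ ^ 2 / Gamma θ ^ 2)) := by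
  have hlim (x c : ℝ) (hx : 0 < x) : Tendsto (fun δ => Gamma (x + c * δ)) (𝓝 0) (𝓝 (Gamma x)) :=
    (analyticOnNhd_Gamma_Ioi x hx).continuousAt.tendsto.comp (tendsto_const_add_mul_nhds_zero x c)
  have hΓθ := Gamma_pos_of_pos hθ
  have hvalue : θ * Gamma (θ + 1) * Gamma 1 ^ 2 / (Gamma θ * Gamma θ ^ 2) =
      θ ^ 2 / Gamma θ ^ 2 := by
    rw [Gamma_add_one hθ.ne', Gamma_one]
    field_simp
  rw [← hvalue]
  refine (tendsto_const_nhds.mul ((hlim 1 1 one_pos).pow 2)).div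
    ((hlim θ 2 hθ).mul ((hlim θ 1 hθ).pow 2)) (by positivity) |>.congr fun δ => ?_
  simp [add_comm]

/-- For `θ > 0` and `χ₂(δ) = Γ(δ)²(θΓ(θ+1)/Γ(θ+2δ) − Γ(θ+1)²/Γ(θ+δ)²)`, as `δ → 0⁺`,
`χ₂(δ) → (θ²/Γ(θ)²)(Γ'(θ)² − Γ(θ)Γ''(θ))`. -/
theorem chi2_limit (θ : ℝ) (hθ : 0 < θ) :
    Filter.Tendsto
      (fun δ : ℝ => Real.Gamma δ ^ 2 *
        (θ * Real.Gamma (θ + 1) / Real.Gamma (θ + 2 * δ)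
          - Real.Gamma (θ + 1) ^ 2 / Real.Gamma (θ + δ) ^ 2))
      (nhdsWithin 0 (Set.Ioi 0))
      (nhds ((θ ^ 2 / Real.Gamma θ ^ 2) *
        (deriv Real.Gamma θ ^ 2 - Real.Gamma θ * deriv (deriv Real.Gamma) θ))) := by
  have hΓ := Real.analyticOnNhd_Gamma_Ioi
  have hquotient := tendsto_sq_sub_mul_div_sq
    (eventually_of_mem (Ioi_mem_nhds hθ) fun x hx => (hΓ x hx).differentiableAt)
    (hΓ.deriv θ hθ).differentiableAt
  refine ((tendsto_chi2_prefactor hθ).mono_left nhdsWithin_le_nhds |>.mul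
    (hquotient.mono_left (nhdsGT_le_nhdsNE 0))).congr' ?_
  filter_upwards [self_mem_nhdsWithin] with δ hδ
  exact (chi2_factorization hθ hδ).symm
end

section
/- Let (X_i) be distributed according to the Poisson–Dirichlet distribution PD(θ) and V > 0 an independent random variable with law ρ. Then the k-th correlation function of the point process Σ_i δ_{V·X_i} is r_k(z_1,…,z_k) = (θ^k/(z_1⋯z_k)) ∫_{(|z|,∞)} (1 − |z|/v)^{θ−1} ρ(dv), where |z| = z_1 + ⋯ + z_k; in particular, z_1⋯z_k·r_k(z_1,…,z_k) = θ^k·g(z_1+⋯+z_k) for a function g independent of k. -/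
open MeasureTheory ENNReal

/-- `r` is the `k`-th correlation function of the point process
`Σ_i 1_{Y_i > 0} δ_{Y_i}` under `P`: for every nonnegative measurable `f`,
`E[Σ_{distinct tuples} f(Y_{i₁},…,Y_{i_k})]` equals the integral of `f·r` over
`(0,∞)^k` with respect to Lebesgue measure. -/
def IsCorrelationFn {Ω : Type*} [MeasurableSpace Ω] (P : Measure Ω)
    (Y : Ω → ℕ → ℝ) (k : ℕ) (r : (Fin k → ℝ) → ℝ) : Prop :=
  ∀ f : (Fin k → ℝ) → ℝ≥0∞, Measurable f →
    ∫⁻ ω, ∑' ι : Fin k ↪ ℕ,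
        (if ∀ j, 0 < Y ω (ι j) then f (fun j => Y ω (ι j)) else 0) ∂P
      = ∫⁻ x in {x : Fin k → ℝ | ∀ j, 0 < x j},
          f x * ENNReal.ofReal (r x) ∂(volume : Measure (Fin k → ℝ))

/-!
Given `V = v`, the scaled process `v • X` is the PD(θ) process dilated by `v`, so the change of
variables `z ↦ v • z` shows that its `k`-th correlation function is `v⁻ᵏ r_k(v⁻¹ • z)`, where
`r_k` is that of PD(θ); by independence and Tonelli, the correlation function of `V • X` is the
`ρ`-average of these. For `z > 0` one computes
`v⁻ᵏ r_k(v⁻¹ • z) = θ^k / (z₁⋯z_k) · (1 - |z|/v)^(θ-1) · 1{|z| < v}`, which gives the formula.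

The Bochner integral `g(s) = ∫_{(s,∞)} (1 - s/v)^(θ-1) ρ(dv)` is `0` where the integral
diverges, so the argument also needs `g(|z|) < ∞` for a.e. `z`. This holds because `g` is
integrable on every `(0, n)`: for `s < n` the integrand is at most
`1 + (1 - s/m)^(θ-1)` with `m = min n v`, whose integral over `(0, m)` is `m/θ ≤ n/θ`.
-/

open Set

theorem lintegral_comp_smul_of_pos {E : Type*} [NormedAddCommGroup E] [NormedSpace ℝ E]
    [MeasurableSpace E] [BorelSpace E] [FiniteDimensional ℝ E] (μ : Measure E)
    [μ.IsAddHaarMeasure] (g : E → ℝ≥0∞) {R : ℝ} (hR : 0 < R) :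
    ∫⁻ x, g (R • x) ∂μ = ENNReal.ofReal ((R ^ Module.finrank ℝ E)⁻¹) * ∫⁻ x, g x ∂μ := by
  have hmap := μ.map_addHaar_smul hR.ne'
  rw [abs_of_pos (by positivity)] at hmap
  rw [← smul_eq_mul, ← lintegral_smul_measure, ← hmap]
  exact (lintegral_map_equiv g (Homeomorph.smulOfNeZero R hR.ne').toMeasurableEquiv).symm

lemma measurableSet_forall_pos (k : ℕ) : MeasurableSet {x : Fin k → ℝ | ∀ j, 0 < x j} := by
  measurability

lemma setLIntegral_forall_pos_comp_smul {k : ℕ} (g : (Fin k → ℝ) → ℝ≥0∞) {R : ℝ} (hR : 0 < R) :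
    ∫⁻ z in {z : Fin k → ℝ | ∀ j, 0 < z j}, g (R • z)
      = ENNReal.ofReal ((R ^ k)⁻¹) * ∫⁻ w in {w : Fin k → ℝ | ∀ j, 0 < w j}, g w := by
  have hmem : ∀ z : Fin k → ℝ, (∀ j, 0 < (R • z) j) ↔ ∀ j, 0 < z j := fun z =>
    forall_congr' fun j => smul_pos_iff_of_pos_left hR
  have hscale := lintegral_comp_smul_of_pos volume ({w | ∀ j, 0 < w j}.indicator g) hR
  rw [Module.finrank_fin_fun] at hscale
  rw [← lintegral_indicator (measurableSet_forall_pos k),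
    ← lintegral_indicator (measurableSet_forall_pos k), ← hscale]
  congr 1 with z
  simp only [indicator, mem_ofPred_eq, hmem]

lemma quasiMeasurePreserving_sum (m : ℕ) :
    Measure.QuasiMeasurePreserving (fun w : Fin (m + 1) → ℝ => ∑ j, w j) := by
  refine ⟨by fun_prop, Measure.AbsolutelyContinuous.mk fun N hN hN0 => ?_⟩
  let e := MeasurableEquiv.piFinSuccAbove (fun _ : Fin (m + 1) => ℝ) 0
  have he : MeasurePreserving e volume (volume.prod volume) :=
    measurePreserving_piFinSuccAbove (fun _ => volume) 0
  have hS : MeasurableSet {p : ℝ × (Fin m → ℝ) | p.1 + ∑ j, p.2 j ∈ N} :=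
    (by fun_prop : Measurable fun p : ℝ × (Fin m → ℝ) => p.1 + ∑ j, p.2 j) hN
  have hpre : (fun w : Fin (m + 1) → ℝ => ∑ j, w j) ⁻¹' N
      = e ⁻¹' {p : ℝ × (Fin m → ℝ) | p.1 + ∑ j, p.2 j ∈ N} := by
    ext w
    simp [e, Fin.sum_univ_succAbove w 0, Fin.tail]
  rw [Measure.map_apply (by fun_prop) hN, hpre, he.measure_preimage hS.nullMeasurableSet,
    Measure.prod_apply_symm hS]
  have hfiber : ∀ y : Fin m → ℝ, volume {a : ℝ | a + ∑ j, y j ∈ N} = 0 := fun y =>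
    (measure_preimage_add_right volume (∑ j, y j) N).trans hN0
  simp [hfiber]

theorem IsCorrelationFn.lintegral_tsum_mul_of_indepFun {Ω : Type*} [MeasurableSpace Ω]
    {P : Measure Ω} [IsFiniteMeasure P] {X : Ω → ℕ → ℝ} {V : Ω → ℝ} {k : ℕ}
    {r : (Fin k → ℝ) → ℝ} (hr : IsCorrelationFn P X k r) (hr_meas : Measurable r)
    (hX : Measurable X) (hV : Measurable V) (hVpos : ∀ ω, 0 < V ω)
    (hindep : ProbabilityTheory.IndepFun X V P) {f : (Fin k → ℝ) → ℝ≥0∞} (hf : Measurable f) :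
    ∫⁻ ω, ∑' ι : Fin k ↪ ℕ,
        (if ∀ j, 0 < V ω * X ω (ι j) then f (fun j => V ω * X ω (ι j)) else 0) ∂P
      = ∫⁻ w in {w : Fin k → ℝ | ∀ j, 0 < w j},
          f w * ∫⁻ v, ENNReal.ofReal ((v ^ k)⁻¹ * r (v⁻¹ • w)) ∂(P.map V) := by
  have : Countable (Fin k ↪ ℕ) := Function.Embedding.countable ⟨_, DFunLike.coe_injective⟩
  set G : (ℕ → ℝ) × ℝ → ℝ≥0∞ := fun p =>
    ∑' ι : Fin k ↪ ℕ, if ∀ j, 0 < p.1 (ι j) then f (p.2 • fun j => p.1 (ι j)) else 0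
  have hG : Measurable G := by
    refine Measurable.tsum fun ι => Measurable.ite ?_ (by fun_prop) measurable_const
    simp only [ofPred_forall]
    exact MeasurableSet.iInter fun j => measurableSet_lt measurable_const (by fun_prop)
  have h_indep : ∫⁻ ω, G (X ω, V ω) ∂P = ∫⁻ v, (∫⁻ ω, G (X ω, v) ∂P) ∂(P.map V) := by
    rw [← lintegral_map hG (hX.prodMk hV),
      (ProbabilityTheory.indepFun_iff_map_prod_eq_prod_map_map hX.aemeasurable
        hV.aemeasurable).1 hindep, lintegral_prod_symm' _ hG]
    exact lintegral_congr fun v => lintegral_map (by fun_prop) hX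
  have h_scale : ∀ v, 0 < v → ∫⁻ ω, G (X ω, v) ∂P
      = ∫⁻ w in {w : Fin k → ℝ | ∀ j, 0 < w j},
          f w * ENNReal.ofReal ((v ^ k)⁻¹ * r (v⁻¹ • w)) := by
    intro v hv
    refine (hr (fun z => f (v • z)) (hf.comp (measurable_const_smul v))).trans ?_
    have hscale :=
      setLIntegral_forall_pos_comp_smul (fun w => f w * ENNReal.ofReal (r (v⁻¹ • w))) hv
    simp only [inv_smul_smul₀ hv.ne'] at hscale
    rw [hscale, ← lintegral_const_mul' _ _ ENNReal.ofReal_ne_top]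
    congr 1 with w
    rw [ENNReal.ofReal_mul (by positivity)]
    ring
  have hρ : ∀ᵐ v ∂(P.map V), 0 < v :=
    (ae_map_iff hV.aemeasurable measurableSet_Ioi).2 (ae_of_all _ hVpos)
  calc _ = ∫⁻ ω, G (X ω, V ω) ∂P := by
        refine lintegral_congr fun ω => tsum_congr fun ι => ?_
        simp only [mul_pos_iff_of_pos_left (hVpos ω)]
        rfl
    _ = ∫⁻ v, (∫⁻ w in {w : Fin k → ℝ | ∀ j, 0 < w j},
          f w * ENNReal.ofReal ((v ^ k)⁻¹ * r (v⁻¹ • w))) ∂(P.map V) := by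
        rw [h_indep]
        exact lintegral_congr_ae (hρ.mono h_scale)
    _ = _ := by
        rw [lintegral_lintegral_swap (by fun_prop)]
        exact lintegral_congr fun w => lintegral_const_mul _ (by fun_prop)

noncomputable def pdKernel (θ s v : ℝ) : ℝ := if s < v then (1 - s / v) ^ (θ - 1) else 0

/-- The function `g` of the statement, valued in `ℝ≥0∞` so that it is meaningful where the
integral diverges. -/
noncomputable def pdProfile (θ : ℝ) (ρ : Measure ℝ) (s : ℝ) : ℝ≥0∞ :=
  ∫⁻ v, ENNReal.ofReal (pdKernel θ s v) ∂ρ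

section pdProfile

variable {θ : ℝ} {ρ : Measure ℝ}

lemma pdKernel_nonneg {s : ℝ} (hs : 0 ≤ s) (v : ℝ) : 0 ≤ pdKernel θ s v := by
  unfold pdKernel
  split_ifs with hsv
  · exact Real.rpow_nonneg (by linarith [div_le_one_of_le₀ hsv.le (hs.trans hsv.le)]) _
  · exact le_rfl

lemma measurable_pdKernel (θ : ℝ) : Measurable fun p : ℝ × ℝ => pdKernel θ p.1 p.2 :=
  Measurable.ite (measurableSet_lt measurable_fst measurable_snd)
    ((measurable_const.sub (measurable_fst.div measurable_snd)).pow_const _) measurable_const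

lemma measurable_pdProfile (θ : ℝ) (ρ : Measure ℝ) [SFinite ρ] : Measurable (pdProfile θ ρ) :=
  (measurable_pdKernel θ).ennreal_ofReal.lintegral_prod_right'

lemma one_sub_div_rpow_le {s m v : ℝ} (hs : 0 ≤ s) (hsm : s < m) (hmv : m ≤ v) :
    (1 - s / v) ^ (θ - 1) ≤ 1 + (1 - s / m) ^ (θ - 1) := by
  have hm : 0 < m := hs.trans_lt hsm
  have hsv : s / v ≤ s / m := div_le_div_of_nonneg_left hs hm hmv
  have hsm' : s / m < 1 := (div_lt_one hm).2 hsm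
  rcases le_or_gt 1 θ with hθ | hθ
  · have : (1 - s / v) ^ (θ - 1) ≤ 1 :=
      Real.rpow_le_one (by linarith) (by linarith [div_nonneg hs (hm.le.trans hmv)])
        (by linarith)
    linarith [Real.rpow_nonneg (by linarith : 0 ≤ 1 - s / m) (θ - 1)]
  · have : (1 - s / v) ^ (θ - 1) ≤ (1 - s / m) ^ (θ - 1) :=
      Real.rpow_le_rpow_of_nonpos (by linarith) (by linarith) (by linarith)
    linarith

lemma setLIntegral_Ioo_one_sub_div_rpow (hθ : 0 < θ) {m : ℝ} (hm : 0 < m) :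
    ∫⁻ s in Ioo 0 m, ENNReal.ofReal ((1 - s / m) ^ (θ - 1)) = ENNReal.ofReal (m / θ) := by
  set F : ℝ → ℝ := fun s => -(m / θ) * (1 - s / m) ^ θ
  have hcont : ContinuousOn F (Icc 0 m) :=
    (continuousOn_const.mul ((continuousOn_const.sub (continuousOn_id.div_const m)).rpow_const
      fun _ _ => Or.inr hθ.le))
  have hderiv : ∀ s ∈ Ioo 0 m, HasDerivAt F ((1 - s / m) ^ (θ - 1)) s := by
    intro s hs
    have hpos : 0 < 1 - s / m := by rw [sub_pos, div_lt_one hm]; exact hs.2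
    refine ((((hasDerivAt_id s).div_const m).const_sub 1).rpow_const (p := θ)
      (Or.inl hpos.ne') |>.const_mul (-(m / θ))).congr_deriv ?_
    simp only [id]
    field_simp
  have hnonneg : ∀ s ∈ Ioo 0 m, 0 ≤ (1 - s / m) ^ (θ - 1) := fun s hs =>
    Real.rpow_nonneg (by rw [sub_nonneg, div_le_one hm]; exact hs.2.le) _
  have hint := intervalIntegral.integrableOn_deriv_of_nonneg hcont hderiv hnonneg
  rw [setLIntegral_congr Ioo_ae_eq_Ioc, ← ofReal_integral_eq_lintegral_ofReal hint
    ((ae_restrict_iff' measurableSet_Ioc).2 (ae_of_all _ fun s hs => ?_)),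
    ← intervalIntegral.integral_of_le hm.le,
    intervalIntegral.integral_eq_sub_of_hasDerivAt_of_le hm.le hcont hderiv
      ((intervalIntegrable_iff_integrableOn_Ioc_of_le hm.le).2 hint)]
  · simp [F, hm.ne', Real.zero_rpow hθ.ne']
  · exact Real.rpow_nonneg (by rw [sub_nonneg, div_le_one hm]; exact hs.2) _

lemma setLIntegral_pdKernel_le (hθ : 0 < θ) (n v : ℝ) :
    ∫⁻ s in Ioo 0 n, ENNReal.ofReal (pdKernel θ s v)
      ≤ ENNReal.ofReal n + ENNReal.ofReal (n / θ) := by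
  set m := min n v
  have hpt : ∀ s ∈ Ioo 0 n, ENNReal.ofReal (pdKernel θ s v)
      ≤ 1 + (Ioo 0 m).indicator (fun s => ENNReal.ofReal ((1 - s / m) ^ (θ - 1))) s := by
    intro s hs
    unfold pdKernel
    split_ifs with hsv
    · have hsm : s ∈ Ioo 0 m := ⟨hs.1, lt_min hs.2 hsv⟩
      rw [indicator_of_mem hsm, ← ENNReal.ofReal_one, ← ENNReal.ofReal_add zero_le_one
        (Real.rpow_nonneg (by rw [sub_nonneg, div_le_one (hs.1.trans hsm.2)]; exact hsm.2.le) _)]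
      exact ENNReal.ofReal_le_ofReal (one_sub_div_rpow_le hs.1.le hsm.2 (min_le_right n v))
    · simp
  have hm : ∫⁻ s in Ioo 0 m, ENNReal.ofReal ((1 - s / m) ^ (θ - 1)) ≤ ENNReal.ofReal (n / θ) := by
    rcases le_or_gt m 0 with hm | hm
    · simp [Ioo_eq_empty_of_le hm]
    · rw [setLIntegral_Ioo_one_sub_div_rpow hθ hm]
      gcongr
      exact min_le_left n v
  calc ∫⁻ s in Ioo 0 n, ENNReal.ofReal (pdKernel θ s v)
      ≤ ∫⁻ s in Ioo 0 n, (1 + (Ioo 0 m).indicator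
          (fun s => ENNReal.ofReal ((1 - s / m) ^ (θ - 1))) s) :=
        setLIntegral_mono' measurableSet_Ioo hpt
    _ ≤ volume (Ioo 0 n) + ∫⁻ s in Ioo 0 m, ENNReal.ofReal ((1 - s / m) ^ (θ - 1)) := by
        rw [lintegral_add_left measurable_const, setLIntegral_one]
        exact add_le_add le_rfl
          ((setLIntegral_le_lintegral _ _).trans_eq (lintegral_indicator measurableSet_Ioo _))
    _ ≤ ENNReal.ofReal n + ENNReal.ofReal (n / θ) := by
        gcongr
        simp [Real.volume_Ioo]

lemma setLIntegral_pdProfile_lt_top [IsFiniteMeasure ρ] (hθ : 0 < θ) (n : ℝ) :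
    ∫⁻ s in Ioo 0 n, pdProfile θ ρ s < ∞ := by
  calc ∫⁻ s in Ioo 0 n, pdProfile θ ρ s
      = ∫⁻ v, (∫⁻ s in Ioo 0 n, ENNReal.ofReal (pdKernel θ s v)) ∂ρ :=
        lintegral_lintegral_swap (measurable_pdKernel θ).ennreal_ofReal.aemeasurable
    _ ≤ ∫⁻ _, ENNReal.ofReal n + ENNReal.ofReal (n / θ) ∂ρ :=
        lintegral_mono fun v => setLIntegral_pdKernel_le hθ n v
    _ < ∞ := by rw [lintegral_const]; finiteness

lemma ae_pdProfile_lt_top [IsFiniteMeasure ρ] (hθ : 0 < θ) :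
    ∀ᵐ s, 0 < s → pdProfile θ ρ s < ∞ := by
  have hIoi : Ioi (0 : ℝ) = ⋃ n : ℕ, Ioo 0 (n : ℝ) := by
    ext s
    simpa using fun _ : 0 < s => exists_nat_gt s
  refine (ae_restrict_iff' measurableSet_Ioi).1 ?_
  rw [hIoi, ae_restrict_iUnion_iff]
  exact fun n => ae_lt_top (measurable_pdProfile θ ρ) (setLIntegral_pdProfile_lt_top hθ n).ne

lemma ae_pdProfile_sum_lt_top [IsFiniteMeasure ρ] (hθ : 0 < θ) (k : ℕ) :
    ∀ᵐ w : Fin k → ℝ, (∀ j, 0 < w j) → pdProfile θ ρ (∑ j, w j) < ∞ := by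
  cases k with
  | zero =>
    refine ae_of_all _ fun w _ => ?_
    have hle : ∀ v, ENNReal.ofReal (pdKernel θ (∑ j, w j) v) ≤ 1 := fun v => by
      simp only [Finset.univ_eq_empty, Finset.sum_empty, pdKernel, zero_div, sub_zero,
        Real.one_rpow]
      exact ENNReal.ofReal_le_one.2 (by split_ifs <;> norm_num)
    calc pdProfile θ ρ (∑ j, w j) ≤ ∫⁻ _, 1 ∂ρ := lintegral_mono hle
      _ < ∞ := by simp
  | succ m =>
    filter_upwards [(quasiMeasurePreserving_sum m).ae (ae_pdProfile_lt_top (ρ := ρ) hθ)]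
      with w hw hpos
    exact hw (Finset.sum_pos (fun j _ => hpos j) Finset.univ_nonempty)

lemma ofReal_setIntegral_eq_pdProfile {s : ℝ} (hs : 0 ≤ s) (hfin : pdProfile θ ρ s ≠ ∞) :
    ENNReal.ofReal (∫ v in Ioi s, (1 - s / v) ^ (θ - 1) ∂ρ) = pdProfile θ ρ s := by
  have hK : (fun v => pdKernel θ s v) = (Ioi s).indicator fun v => (1 - s / v) ^ (θ - 1) := by
    ext v
    simp [pdKernel, indicator_apply]
  have hmeas : Measurable fun v => pdKernel θ s v :=
    (measurable_pdKernel θ).comp measurable_prodMk_left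
  rw [← integral_indicator measurableSet_Ioi, ← hK]
  exact ofReal_integral_eq_lintegral_ofReal ⟨hmeas.aestronglyMeasurable,
      (hasFiniteIntegral_iff_ofReal (ae_of_all _ (pdKernel_nonneg hs))).2 hfin.lt_top⟩
    (ae_of_all _ (pdKernel_nonneg hs))

end pdProfile

noncomputable def pdCorrelation (θ : ℝ) (k : ℕ) (x : Fin k → ℝ) : ℝ :=
  if ∑ j, x j < 1 then θ ^ k / (∏ j, x j) * (1 - ∑ j, x j) ^ (θ - 1) else 0

lemma measurable_pdCorrelation (θ : ℝ) (k : ℕ) : Measurable (pdCorrelation θ k) :=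
  Measurable.ite (measurableSet_lt (by fun_prop) measurable_const) (by fun_prop) measurable_const

lemma pdCorrelation_inv_smul {θ v : ℝ} {k : ℕ} {w : Fin k → ℝ} (hv : 0 < v)
    (hw : ∀ j, 0 < w j) :
    (v ^ k)⁻¹ * pdCorrelation θ k (v⁻¹ • w) = θ ^ k / (∏ j, w j) * pdKernel θ (∑ j, w j) v := by
  have hsum : ∑ j, (v⁻¹ • w) j = (∑ j, w j) / v := by
    simp [← Finset.mul_sum, div_eq_inv_mul]
  have hprod : ∏ j, (v⁻¹ • w) j = (∏ j, w j) / v ^ k := by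
    simp [Finset.prod_mul_distrib, div_eq_inv_mul]
  have hP : 0 < ∏ j, w j := Finset.prod_pos fun j _ => hw j
  simp only [pdCorrelation, pdKernel, hsum, hprod, div_lt_one hv]
  split_ifs
  · field_simp
  · simp

lemma lintegral_pdCorrelation_inv_smul {θ : ℝ} (hθ : 0 ≤ θ) {ρ : Measure ℝ}
    (hρ : ∀ᵐ v ∂ρ, 0 < v) {k : ℕ} {w : Fin k → ℝ} (hw : ∀ j, 0 < w j) :
    ∫⁻ v, ENNReal.ofReal ((v ^ k)⁻¹ * pdCorrelation θ k (v⁻¹ • w)) ∂ρ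
      = ENNReal.ofReal (θ ^ k / ∏ j, w j) * pdProfile θ ρ (∑ j, w j) := by
  have hP : 0 < ∏ j, w j := Finset.prod_pos fun j _ => hw j
  rw [pdProfile, ← lintegral_const_mul' _ _ ENNReal.ofReal_ne_top]
  refine lintegral_congr_ae ?_
  filter_upwards [hρ] with v hv
  rw [pdCorrelation_inv_smul hv hw, ENNReal.ofReal_mul (by positivity)]

/-- Let `(X_i)` be PD(θ)-distributed (expressed through its known correlation functions)
and `V > 0` an independent random variable with law `ρ = P.map V`. Then the `k`-th
correlation function of `Σ_i δ_{V·X_i}` is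
`r_k(z) = (θ^k/(z₁⋯z_k)) ∫_{(|z|,∞)} (1 − |z|/v)^{θ−1} ρ(dv)`; in particular
`z₁⋯z_k·r_k(z) = θ^k·g(z₁+⋯+z_k)` for a function `g` independent of `k`. -/
theorem lifted_PD_correlation
    {Ω : Type*} [MeasurableSpace Ω] (P : Measure Ω) [IsProbabilityMeasure P]
    (θ : ℝ) (hθ : 0 < θ)
    (X : Ω → ℕ → ℝ) (V : Ω → ℝ)
    (hX : Measurable X) (hV : Measurable V) (hVpos : ∀ ω, 0 < V ω)
    (hindep : ProbabilityTheory.IndepFun X V P)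
    (hPD : ∀ k : ℕ, IsCorrelationFn P X k (fun x =>
      if ∑ j, x j < 1 then θ ^ k / (∏ j, x j) * (1 - ∑ j, x j) ^ (θ - 1) else 0))
    (k : ℕ) :
    IsCorrelationFn P (fun ω i => V ω * X ω i) k (fun z =>
        θ ^ k / (∏ j, z j) *
          ∫ v in Set.Ioi (∑ j, z j), (1 - (∑ j, z j) / v) ^ (θ - 1) ∂(P.map V)) ∧
    ∃ g : ℝ → ℝ, ∀ (k' : ℕ) (z : Fin k' → ℝ), (∀ j, 0 < z j) →
      (∏ j, z j) *
          (θ ^ k' / (∏ j, z j) *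
            ∫ v in Set.Ioi (∑ j, z j), (1 - (∑ j, z j) / v) ^ (θ - 1) ∂(P.map V))
        = θ ^ k' * g (∑ j, z j) := by
  refine ⟨fun f hf => ?_, fun s => ∫ v in Ioi s, (1 - s / v) ^ (θ - 1) ∂(P.map V),
    fun k' z hz => ?_⟩
  · have : IsProbabilityMeasure (P.map V) := Measure.isProbabilityMeasure_map hV.aemeasurable
    have hρ : ∀ᵐ v ∂(P.map V), 0 < v :=
      (ae_map_iff hV.aemeasurable measurableSet_Ioi).2 (ae_of_all _ hVpos)
    have hPDk : IsCorrelationFn P X k (pdCorrelation θ k) := hPD k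
    rw [hPDk.lintegral_tsum_mul_of_indepFun (measurable_pdCorrelation θ k) hX hV hVpos hindep hf]
    refine setLIntegral_congr_fun_ae (measurableSet_forall_pos k) ?_
    filter_upwards [ae_pdProfile_sum_lt_top (ρ := P.map V) hθ k] with w hfin hw
    have hprod : 0 < ∏ j, w j := Finset.prod_pos fun j _ => hw j
    have hsum : 0 ≤ ∑ j, w j := Finset.sum_nonneg fun j _ => (hw j).le
    rw [lintegral_pdCorrelation_inv_smul hθ.le hρ hw, ENNReal.ofReal_mul (by positivity),
      ofReal_setIntegral_eq_pdProfile hsum (hfin hw).ne]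
  · have : ∏ j, z j ≠ 0 := (Finset.prod_pos fun j _ => hz j).ne'
    field_simp
end

section
/- If V has the gamma density ρ_{θ,b}(v) = Γ(θ)^{-1} b^θ v^{θ−1} e^{−bv} on (0,∞), then for every k ≥ 1 and z_1,…,z_k > 0, (θ^k/(z_1⋯z_k)) ∫_{|z|}^∞ ρ_{θ,b}(v)(1 − |z|/v)^{θ−1} dv = Π_{i=1}^k (θ/z_i)·e^{−b z_i}, where |z| = z_1+⋯+z_k. Hence the lifted PD(θ) process with gamma scaling is a Poisson point process with mean density θ y^{−1} e^{−by}. -/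
/-!
After the shift `v = w + |z|`, the weight `(1 - |z|/v)^(θ-1)` turns `v^(θ-1)` into `w^(θ-1)` and
`e^{-bv}` splits off the factor `e^{-b|z|}`, so the integral is `e^{-b|z|}` times the total mass
of the gamma density, which is `1`; and `e^{-b|z|} = ∏ e^{-b z_i}`.
-/

open MeasureTheory

theorem setIntegral_Ioi_comp_add_right {E : Type*} [NormedAddCommGroup E] [NormedSpace ℝ E]
    (f : ℝ → E) (a d : ℝ) :
    ∫ x in Set.Ioi a, f (x + d) = ∫ x in Set.Ioi (a + d), f x := by
  have := (measurePreserving_add_right volume d).setIntegral_preimage_emb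
    (measurableEmbedding_addRight d) f (Set.Ioi (a + d))
  rwa [Set.preimage_add_const_Ioi, add_sub_cancel_right] at this

theorem rpow_add_mul_one_sub_div_rpow {w s : ℝ} (hw : 0 < w) (hs : 0 ≤ s) (p : ℝ) :
    (w + s) ^ p * (1 - s / (w + s)) ^ p = w ^ p := by
  have hws : 0 < w + s := by linarith
  rw [← Real.mul_rpow hws.le (by rw [sub_nonneg, div_le_one hws]; linarith)]
  congr 1
  field_simp
  ring

theorem integral_Ioi_gamma_density_mul_one_sub_div_rpow {θ b : ℝ} (hθ : 0 < θ) (hb : 0 < b)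
    {s : ℝ} (hs : 0 ≤ s) :
    ∫ v in Set.Ioi s,
        (Real.Gamma θ)⁻¹ * b ^ θ * v ^ (θ - 1) * Real.exp (-b * v) * (1 - s / v) ^ (θ - 1)
      = Real.exp (-b * s) := by
  rw [← zero_add s, ← setIntegral_Ioi_comp_add_right, zero_add]
  have hintegrand : ∀ w ∈ Set.Ioi (0 : ℝ),
      (Real.Gamma θ)⁻¹ * b ^ θ * (w + s) ^ (θ - 1) * Real.exp (-b * (w + s)) *
          (1 - s / (w + s)) ^ (θ - 1)
        = (Real.Gamma θ)⁻¹ * b ^ θ * Real.exp (-b * s) * (w ^ (θ - 1) * Real.exp (-(b * w))) := by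
    intro w hw
    rw [← rpow_add_mul_one_sub_div_rpow hw hs (θ - 1), mul_add, Real.exp_add, neg_mul]
    ring
  rw [setIntegral_congr_fun measurableSet_Ioi hintegrand, integral_const_mul,
    Real.integral_rpow_mul_exp_neg_mul_Ioi hθ hb, one_div, Real.inv_rpow hb.le]
  have hbθ : b ^ θ ≠ 0 := (Real.rpow_pos_of_pos hb θ).ne'
  have hΓ : Real.Gamma θ ≠ 0 := (Real.Gamma_pos_of_pos hθ).ne'
  field_simp

theorem prod_div_mul_exp_neg_mul {ι : Type*} (s : Finset ι) (θ b : ℝ) (z : ι → ℝ) :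
    ∏ j ∈ s, (θ / z j * Real.exp (-b * z j))
      = θ ^ s.card / (∏ j ∈ s, z j) * Real.exp (-b * ∑ j ∈ s, z j) := by
  rw [Finset.prod_mul_distrib, Finset.prod_div_distrib, Finset.prod_const, Finset.mul_sum,
    Real.exp_sum]

theorem gamma_lifted_PD_is_poisson_general (θ b : ℝ) (hθ : 0 < θ) (hb : 0 < b)
    (k : ℕ) (z : Fin k → ℝ) (hz : ∀ j, 0 < z j) :
    θ ^ k / (∏ j, z j) *
        ∫ v in Set.Ioi (∑ j, z j),
          (Real.Gamma θ)⁻¹ * b ^ θ * v ^ (θ - 1) * Real.exp (-b * v) *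
            (1 - (∑ j, z j) / v) ^ (θ - 1)
      = ∏ j, (θ / z j * Real.exp (-b * z j)) := by
  rw [integral_Ioi_gamma_density_mul_one_sub_div_rpow hθ hb
      (Finset.sum_nonneg fun j _ => (hz j).le),
    prod_div_mul_exp_neg_mul, Finset.card_univ, Fintype.card_fin]

/-- For gamma scaling `ρ_{θ,b}(v) = Γ(θ)⁻¹ b^θ v^{θ−1} e^{−bv}`:
`(θ^k/(z₁⋯z_k)) ∫_{|z|}^∞ ρ_{θ,b}(v)(1 − |z|/v)^{θ−1} dv = Π_i (θ/z_i)·e^{−b z_i}`,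
i.e. the correlation functions of the lifted PD(θ) process with gamma scaling are
those of a Poisson point process with mean density `θ y⁻¹ e^{−by}`. -/
theorem gamma_lifted_PD_is_poisson (θ b : ℝ) (hθ : 0 < θ) (hb : 0 < b)
    (k : ℕ) (hk : 1 ≤ k) (z : Fin k → ℝ) (hz : ∀ j, 0 < z j) :
    θ ^ k / (∏ j, z j) *
        ∫ v in Set.Ioi (∑ j, z j),
          (Real.Gamma θ)⁻¹ * b ^ θ * v ^ (θ - 1) * Real.exp (-b * v) *
            (1 - (∑ j, z j) / v) ^ (θ - 1)
      = ∏ j, (θ / z j * Real.exp (-b * z j)) :=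
  gamma_lifted_PD_is_poisson_general θ b hθ hb k z hz
end
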